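/- Assume hypotheses (H1)–(H3) and let q0, q be chosen with 1 − 1/p < 1/q0 < min{β, δα, δ/p, 1/2} and 1/(q0·δ) ≤ 1/q < min{α, 1/p}. Let [t0,t1] ⊆ [0,T] and let x : [t0,t1] → ℝ^d be continuous of finite q-variation. Then the path t ↦ g(t, x_t) is of finite q0-variation on [t0,t1] and |||g(·, x_·)|||_{q0-var,[t0,t1]} ≤ M · (1 + |||x|||_{q-var,[t0,t1]}), where M := max{L_g, a·T^{1−α}, |g(0,0)| + h(0,T)^β, ‖b‖_{L_{1/(1−α)}}}. -/

import Mathlib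

open scoped BigOperators
open Set

noncomputable section

/-- Euclidean space `ℝ^n`. -/
abbrev Ed (n : ℕ) : Type := EuclideanSpace ℝ (Fin n)

section PVarDefs

variable {E F : Type*} [NormedAddCommGroup E] [NormedSpace ℝ E]
  [NormedAddCommGroup F] [NormedSpace ℝ F]

/-- The set of sums `Σ_i ‖x (t (i+1)) - x (t i)‖ ^ p` over all finite partitions
`a = t 0 < t 1 < ⋯ < t n = b` of `[a,b]`. -/
def pVarSums (p : ℝ) (x : ℝ → E) (a b : ℝ) : Set ℝ :=
  { v | ∃ n : ℕ, ∃ t : Fin (n + 1) → ℝ, StrictMono t ∧ t 0 = a ∧ t (Fin.last n) = b ∧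
      v = ∑ i : Fin n, ‖x (t i.succ) - x (t i.castSucc)‖ ^ p }

/-- The `p`-variation seminorm `|||x|||_{p-var,[a,b]}`. -/
def pVar (p : ℝ) (x : ℝ → E) (a b : ℝ) : ℝ :=
  sSup (pVarSums p x a b) ^ (1 / p)

/-- `x` is of finite `p`-variation on `[a,b]`. -/
def FinitePVar (p : ℝ) (x : ℝ → E) (a b : ℝ) : Prop :=
  BddAbove (pVarSums p x a b)

/-- The `p`-variation norm `‖x‖_{p-var,[a,b]} = ‖x a‖ + |||x|||_{p-var,[a,b]}`. -/
def pVarNorm (p : ℝ) (x : ℝ → E) (a b : ℝ) : ℝ :=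
  ‖x a‖ + pVar p x a b

/-- A control function on `[a,b]`: continuous on the simplex, vanishing on the diagonal,
superadditive and nonnegative. -/
def IsControlOn (a b : ℝ) (w : ℝ → ℝ → ℝ) : Prop :=
  ContinuousOn (fun pr : ℝ × ℝ => w pr.1 pr.2) {pr : ℝ × ℝ | a ≤ pr.1 ∧ pr.1 ≤ pr.2 ∧ pr.2 ≤ b} ∧
  (∀ t : ℝ, a ≤ t → t ≤ b → w t t = 0) ∧
  (∀ s t u : ℝ, a ≤ s → s ≤ t → t ≤ u → u ≤ b → w s t + w t u ≤ w s u) ∧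
  (∀ s t : ℝ, a ≤ s → s ≤ t → t ≤ b → 0 ≤ w s t)

/-- A tagged partition `a = t 0 < t 1 < ⋯ < t n = b` of `[a,b]`, with tags
`tag i ∈ [t i, t (i+1)]`. -/
structure TaggedPartition (a b : ℝ) where
  n : ℕ
  t : Fin (n + 1) → ℝ
  tag : Fin n → ℝ
  mono : StrictMono t
  first : t 0 = a
  last : t (Fin.last n) = b
  tag_mem : ∀ i : Fin n, tag i ∈ Set.Icc (t i.castSucc) (t i.succ)

/-- The mesh of a tagged partition. -/
def TaggedPartition.mesh {a b : ℝ} (P : TaggedPartition a b) : ℝ :=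
  ⨆ i : Fin P.n, (P.t i.succ - P.t i.castSucc)

/-- Riemann–Stieltjes sum of `x` against `ω` along a tagged partition. -/
def RSSum (x : ℝ → E →L[ℝ] F) (ω : ℝ → E) {a b : ℝ} (P : TaggedPartition a b) : F :=
  ∑ i : Fin P.n, x (P.tag i) (ω (P.t i.succ) - ω (P.t i.castSucc))

/-- `v` is the Young integral `∫_a^b x dω`: the Riemann–Stieltjes sums converge to `v`
as the mesh tends to `0`. -/
def IsYoungIntegral (x : ℝ → E →L[ℝ] F) (ω : ℝ → E) (a b : ℝ) (v : F) : Prop :=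
  ∀ ε : ℝ, 0 < ε → ∃ δ : ℝ, 0 < δ ∧
    ∀ P : TaggedPartition a b, P.mesh < δ → ‖RSSum x ω P - v‖ < ε

/-- The Young integral `∫_a^b x dω` (an arbitrary value, `0`, if the limit does not exist). -/
def youngIntegral (x : ℝ → E →L[ℝ] F) (ω : ℝ → E) (a b : ℝ) : F :=
  letI := Classical.propDecidable (∃ v, IsYoungIntegral x ω a b v)
  if hv : ∃ v, IsYoungIntegral x ω a b v then hv.choose else 0

end PVarDefs

namespace Real

variable {ι : Type*} {s : Finset ι} {u : ι → ℝ}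

theorem sum_rpow_le_rpow_sum (hu : ∀ i ∈ s, 0 ≤ u i) {r : ℝ} (hr : 1 ≤ r) :
    ∑ i ∈ s, u i ^ r ≤ (∑ i ∈ s, u i) ^ r := by
  induction s using Finset.cons_induction with
  | empty => simp [zero_rpow (by linarith : r ≠ 0)]
  | cons j s hj ih =>
    have hu' : ∀ i ∈ s, 0 ≤ u i := fun i hi => hu i (Finset.mem_cons_of_mem hi)
    rw [Finset.sum_cons, Finset.sum_cons]
    calc u j ^ r + ∑ i ∈ s, u i ^ r ≤ u j ^ r + (∑ i ∈ s, u i) ^ r := by gcongr; exact ih hu'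
      _ ≤ (u j + ∑ i ∈ s, u i) ^ r :=
        add_rpow_le_rpow_add (hu j (Finset.mem_cons_self j s)) (Finset.sum_nonneg hu') hr

theorem rpow_sum_rpow_le_of_le (hu : ∀ i ∈ s, 0 ≤ u i) {q r : ℝ} (hq : 0 < q) (hqr : q ≤ r) :
    (∑ i ∈ s, u i ^ r) ^ (1 / r) ≤ (∑ i ∈ s, u i ^ q) ^ (1 / q) := by
  have hS : 0 ≤ ∑ i ∈ s, u i ^ q := Finset.sum_nonneg fun i hi => rpow_nonneg (hu i hi) q
  calc (∑ i ∈ s, u i ^ r) ^ (1 / r) = (∑ i ∈ s, (u i ^ q) ^ (r / q)) ^ (1 / r) := by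
        refine congrArg (· ^ (1 / r)) (Finset.sum_congr rfl fun i hi => ?_)
        rw [← rpow_mul (hu i hi), mul_div_cancel₀ _ hq.ne']
    _ ≤ ((∑ i ∈ s, u i ^ q) ^ (r / q)) ^ (1 / r) :=
        rpow_le_rpow (Finset.sum_nonneg fun i hi => rpow_nonneg (rpow_nonneg (hu i hi) q) _)
          (sum_rpow_le_rpow_sum (fun i hi => rpow_nonneg (hu i hi) q) ((one_le_div hq).2 hqr))
          (one_div_nonneg.2 (hq.le.trans hqr))
    _ = (∑ i ∈ s, u i ^ q) ^ (1 / q) := by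
        rw [← rpow_mul hS]
        congr 1
        field_simp [(hq.trans_le hqr).ne']

theorem rpow_sum_mul_rpow (hu : ∀ i ∈ s, 0 ≤ u i) {c r : ℝ} (hc : 0 ≤ c) (hr : r ≠ 0) :
    (∑ i ∈ s, (c * u i) ^ r) ^ (1 / r) = c * (∑ i ∈ s, u i ^ r) ^ (1 / r) := by
  rw [Finset.sum_congr rfl fun i hi => mul_rpow hc (hu i hi), ← Finset.mul_sum,
    mul_rpow (rpow_nonneg hc r) (Finset.sum_nonneg fun i hi => rpow_nonneg (hu i hi) r),
    ← rpow_mul hc, mul_one_div_cancel hr, rpow_one]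

theorem pos_and_le_of_one_div_mul_le_one_div {q₀ q δ : ℝ} (hq₀ : 0 < q₀) (hδ₀ : 0 < δ)
    (hδ₁ : δ ≤ 1) (h : 1 / (q₀ * δ) ≤ 1 / q) : 0 < q ∧ q ≤ q₀ := by
  have hq : 0 < q := one_div_pos.1 ((one_div_pos.2 (mul_pos hq₀ hδ₀)).trans_le h)
  refine ⟨hq, (one_div_le_one_div hq₀ hq).1 (le_trans ?_ h)⟩
  exact one_div_le_one_div_of_le (mul_pos hq₀ hδ₀) (mul_le_of_le_one_right hq₀.le hδ₁)

end Real

namespace IsControlOn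

variable {a b : ℝ} {w : ℝ → ℝ → ℝ}

theorem mono (hw : IsControlOn a b w) {a' b' : ℝ} (ha : a ≤ a') (hb : b' ≤ b) :
    IsControlOn a' b' w := by
  obtain ⟨hcont, hdiag, hsup, hnonneg⟩ := hw
  refine ⟨hcont.mono fun pr hpr => ⟨ha.trans hpr.1, hpr.2.1, hpr.2.2.trans hb⟩,
    fun t ht ht' => hdiag t (ha.trans ht) (ht'.trans hb),
    fun s t u hs hst htu hu => hsup s t u (ha.trans hs) hst htu (hu.trans hb),
    fun s t hs hst ht => hnonneg s t (ha.trans hs) hst (ht.trans hb)⟩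

theorem apply_nonneg (hw : IsControlOn a b w) {s t : ℝ} (has : a ≤ s) (hst : s ≤ t) (htb : t ≤ b) :
    0 ≤ w s t :=
  hw.2.2.2 s t has hst htb

theorem apply_le (hw : IsControlOn a b w) {s t : ℝ} (has : a ≤ s) (hst : s ≤ t) (htb : t ≤ b) :
    w s t ≤ w a b := by
  have h₁ := hw.2.2.1 a s t le_rfl has hst htb
  have h₂ := hw.2.2.1 a t b le_rfl (has.trans hst) htb le_rfl
  linarith [hw.apply_nonneg le_rfl has (hst.trans htb), hw.apply_nonneg (has.trans hst) htb le_rfl]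

theorem sum_le (hw : IsControlOn a b w) {n : ℕ} {t : Fin (n + 1) → ℝ} (ht : Monotone t)
    (ha : a ≤ t 0) (hb : t (Fin.last n) ≤ b) :
    ∑ i : Fin n, w (t i.castSucc) (t i.succ) ≤ w (t 0) (t (Fin.last n)) := by
  induction n with
  | zero => simpa using hw.apply_nonneg ha le_rfl hb
  | succ n ih =>
    have ht' : Monotone fun i : Fin (n + 1) => t i.castSucc :=
      ht.comp Fin.strictMono_castSucc.monotone
    have hinit := ih ht' ha ((ht (Fin.le_last _)).trans hb)
    rw [Fin.castSucc_zero] at hinit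
    rw [Fin.sum_univ_castSucc]
    simp only [Fin.succ_castSucc, Fin.succ_last]
    calc _ ≤ w (t 0) (t (Fin.last n).castSucc) + w (t (Fin.last n).castSucc) (t (Fin.last (n + 1))) :=
          add_le_add hinit le_rfl
      _ ≤ w (t 0) (t (Fin.last (n + 1))) :=
          hw.2.2.1 _ _ _ ha (ht (Fin.zero_le _)) (ht (Fin.le_last _)) hb

theorem rpow_sum_rpow_le (hw : IsControlOn a b w) {n : ℕ} {t : Fin (n + 1) → ℝ} (ht : Monotone t)
    (ha : a ≤ t 0) (hb : t (Fin.last n) ≤ b) {β r : ℝ} (hr : 0 < r) (hβr : 1 ≤ β * r) :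
    (∑ i : Fin n, (w (t i.castSucc) (t i.succ) ^ β) ^ r) ^ (1 / r) ≤
      w (t 0) (t (Fin.last n)) ^ β := by
  have hwi : ∀ i : Fin n, 0 ≤ w (t i.castSucc) (t i.succ) := fun i =>
    hw.apply_nonneg (ha.trans (ht (Fin.zero_le _))) (ht (Fin.castSucc_le_succ i))
      ((ht (Fin.le_last _)).trans hb)
  have hsum : 0 ≤ ∑ i : Fin n, w (t i.castSucc) (t i.succ) := Finset.sum_nonneg fun i _ => hwi i
  simp_rw [← Real.rpow_mul (hwi _)]
  calc (∑ i : Fin n, w (t i.castSucc) (t i.succ) ^ (β * r)) ^ (1 / r)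
      ≤ ((∑ i : Fin n, w (t i.castSucc) (t i.succ)) ^ (β * r)) ^ (1 / r) :=
        Real.rpow_le_rpow (Finset.sum_nonneg fun i _ => Real.rpow_nonneg (hwi i) _)
          (Real.sum_rpow_le_rpow_sum (fun i _ => hwi i) hβr) (one_div_nonneg.2 hr.le)
    _ ≤ (w (t 0) (t (Fin.last n)) ^ (β * r)) ^ (1 / r) := by
        gcongr
        exact hw.sum_le ht ha hb
    _ = w (t 0) (t (Fin.last n)) ^ β := by
        rw [← Real.rpow_mul (hsum.trans (hw.sum_le ht ha hb)), mul_assoc,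
          mul_one_div_cancel hr.ne', mul_one]

end IsControlOn

section PVariation

variable {E F : Type*} [NormedAddCommGroup E] [NormedAddCommGroup F]

theorem nonneg_of_mem_pVarSums {p a b v : ℝ} {x : ℝ → E} (hv : v ∈ pVarSums p x a b) : 0 ≤ v := by
  obtain ⟨n, t, -, -, -, rfl⟩ := hv
  exact Finset.sum_nonneg fun i _ => Real.rpow_nonneg (norm_nonneg _) p

theorem sSup_pVarSums_nonneg (p : ℝ) (x : ℝ → E) (a b : ℝ) : 0 ≤ sSup (pVarSums p x a b) :=
  Real.sSup_nonneg fun _ hv => nonneg_of_mem_pVarSums hv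

theorem pVar_nonneg (p : ℝ) (x : ℝ → E) (a b : ℝ) : 0 ≤ pVar p x a b :=
  Real.rpow_nonneg (sSup_pVarSums_nonneg p x a b) _

theorem rpow_le_pVar {p a b v : ℝ} {x : ℝ → E} (hp : 0 ≤ p) (hx : FinitePVar p x a b)
    (hv : v ∈ pVarSums p x a b) : v ^ (1 / p) ≤ pVar p x a b :=
  Real.rpow_le_rpow (nonneg_of_mem_pVarSums hv) (le_csSup hx hv) (one_div_nonneg.2 hp)

theorem finitePVar_and_pVar_le {p a b D : ℝ} {x : ℝ → E} (hp : 0 < p) (hD : 0 ≤ D)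
    (H : ∀ v ∈ pVarSums p x a b, v ^ (1 / p) ≤ D) : FinitePVar p x a b ∧ pVar p x a b ≤ D := by
  have hle : ∀ v ∈ pVarSums p x a b, v ≤ D ^ p := fun v hv => by
    have hv₀ := nonneg_of_mem_pVarSums hv
    simpa [← Real.rpow_mul hv₀, hp.ne'] using
      Real.rpow_le_rpow (Real.rpow_nonneg hv₀ _) (H v hv) hp.le
  refine ⟨⟨D ^ p, hle⟩, ?_⟩
  calc pVar p x a b ≤ (D ^ p) ^ (1 / p) :=
        Real.rpow_le_rpow (sSup_pVarSums_nonneg p x a b)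
          (Real.sSup_le hle (Real.rpow_nonneg hD p)) (one_div_nonneg.2 hp.le)
    _ = D := by rw [← Real.rpow_mul hD, mul_one_div_cancel hp.ne', Real.rpow_one]

/-- Minkowski's inequality in `ℓ^r` splits each partition sum of `y`: the control part is bounded
by superadditivity since `βr ≥ 1`, the path part since `ℓ^q ⊆ ℓ^r`. -/
theorem finitePVar_and_pVar_le_of_norm_sub_le {x : ℝ → E} {y : ℝ → F} {w : ℝ → ℝ → ℝ}
    {a b β L q r : ℝ} (hw : IsControlOn a b w) (hL : 0 ≤ L) (hq : 0 < q) (hqr : q ≤ r)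
    (hr : 1 ≤ r) (hβr : 1 ≤ β * r) (hab : a ≤ b) (hx : FinitePVar q x a b)
    (hy : ∀ s t, a ≤ s → s < t → t ≤ b → ‖y t - y s‖ ≤ w s t ^ β + L * ‖x t - x s‖) :
    FinitePVar r y a b ∧ pVar r y a b ≤ w a b ^ β + L * pVar q x a b := by
  have hr₀ : 0 < r := by linarith
  refine finitePVar_and_pVar_le hr₀
    (add_nonneg (Real.rpow_nonneg (hw.apply_nonneg le_rfl hab le_rfl) β)
      (mul_nonneg hL (pVar_nonneg q x a b))) ?_
  rintro - ⟨n, t, ht, rfl, rfl, rfl⟩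
  have hpath : (∑ i : Fin n, (L * ‖x (t i.succ) - x (t i.castSucc)‖) ^ r) ^ (1 / r) ≤
      L * pVar q x (t 0) (t (Fin.last n)) := by
    rw [Real.rpow_sum_mul_rpow (fun i _ => norm_nonneg _) hL hr₀.ne']
    exact mul_le_mul_of_nonneg_left
      ((Real.rpow_sum_rpow_le_of_le (fun i _ => norm_nonneg _) hq hqr).trans
        (rpow_le_pVar hq.le hx ⟨n, t, ht, rfl, rfl, rfl⟩)) hL
  calc (∑ i : Fin n, ‖y (t i.succ) - y (t i.castSucc)‖ ^ r) ^ (1 / r)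
      ≤ (∑ i : Fin n, (w (t i.castSucc) (t i.succ) ^ β +
          L * ‖x (t i.succ) - x (t i.castSucc)‖) ^ r) ^ (1 / r) := by
        gcongr with i
        exact hy _ _ (ht.monotone (Fin.zero_le _)) (ht Fin.castSucc_lt_succ)
          (ht.monotone (Fin.le_last _))
    _ ≤ (∑ i : Fin n, (w (t i.castSucc) (t i.succ) ^ β) ^ r) ^ (1 / r) +
        (∑ i : Fin n, (L * ‖x (t i.succ) - x (t i.castSucc)‖) ^ r) ^ (1 / r) :=
        Real.Lp_add_le_of_nonneg _ hr
          (fun i _ => Real.rpow_nonneg (hw.apply_nonneg (ht.monotone (Fin.zero_le _))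
            (ht.monotone (Fin.castSucc_le_succ i)) (ht.monotone (Fin.le_last _))) β)
          (fun i _ => mul_nonneg hL (norm_nonneg _))
    _ ≤ _ := add_le_add (hw.rpow_sum_rpow_le ht.monotone le_rfl le_rfl hr₀ hβr) hpath

end PVariation

theorem stmt6_general
    {d m : ℕ} (p T : ℝ) (hp1 : 1 < p)
    (g : ℝ → Ed d → (Ed m →L[ℝ] Ed d))
    (Dg : ℝ → Ed d → (Ed d →L[ℝ] Ed m →L[ℝ] Ed d))
    (β δ Lg : ℝ) (hβ0 : 0 < β) (hδ0 : 0 < δ) (hδ1 : δ ≤ 1) (hLg : 0 < Lg)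
    (h : ℝ → ℝ → ℝ) (hctrl : IsControlOn 0 T h)
    (H1i : ∀ t ∈ Set.Icc (0:ℝ) T, ∀ x y : Ed d, ‖g t x - g t y‖ ≤ Lg * ‖x - y‖)
    (H1iii : ∀ s t : ℝ, 0 ≤ s → s < t → t ≤ T → ∀ x : Ed d,
      ‖g t x - g s x‖ + ‖Dg t x - Dg s x‖ ≤ h s t ^ β)
    (a α : ℝ) (b : ℝ → ℝ)
    (q0 q : ℝ)
    (hq0a : 1 - 1 / p < 1 / q0)
    (hq0b : 1 / q0 < min (min β (δ * α)) (min (δ / p) (1 / 2)))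
    (hqa : 1 / (q0 * δ) ≤ 1 / q)
    (t0 t1 : ℝ) (ht0 : 0 ≤ t0) (ht01 : t0 ≤ t1) (ht1 : t1 ≤ T)
    (x : ℝ → Ed d) (hxq : FinitePVar q x t0 t1) :
    FinitePVar q0 (fun t => g t (x t)) t0 t1 ∧
    pVar q0 (fun t => g t (x t)) t0 t1 ≤
      (max (max Lg (a * T ^ (1 - α))) (max (‖g 0 0‖ + h 0 T ^ β) ((∫ s in (0:ℝ)..T, |b s| ^ (1 / (1 - α))) ^ (1 - α)))) * (1 + pVar q x t0 t1) := by
  simp only [lt_min_iff] at hq0b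
  obtain ⟨⟨hq0β, -⟩, -, hq0_half⟩ := hq0b
  have hq0 : 0 < q0 :=
    one_div_pos.1 ((sub_pos.2 ((div_lt_one (by linarith)).2 hp1)).trans hq0a)
  obtain ⟨hq, hqq0⟩ := Real.pos_and_le_of_one_div_mul_le_one_div hq0 hδ0 hδ1 hqa
  have hincr : ∀ s t, t0 ≤ s → s < t → t ≤ t1 →
      ‖g t (x t) - g s (x s)‖ ≤ h s t ^ β + Lg * ‖x t - x s‖ := by
    intro s t hs hst ht
    have hspace := H1i t ⟨(ht0.trans hs).trans hst.le, ht.trans ht1⟩ (x t) (x s)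
    have htime := H1iii s t (ht0.trans hs) hst (ht.trans ht1) (x s)
    calc ‖g t (x t) - g s (x s)‖ ≤ ‖g t (x t) - g t (x s)‖ + ‖g t (x s) - g s (x s)‖ :=
          norm_sub_le_norm_sub_add_norm_sub _ _ _
      _ ≤ h s t ^ β + Lg * ‖x t - x s‖ := by linarith [norm_nonneg (Dg t (x s) - Dg s (x s))]
  obtain ⟨hfin, hle⟩ := finitePVar_and_pVar_le_of_norm_sub_le (hctrl.mono ht0 ht1) hLg.le hq hqq0
    (by linarith [lt_of_one_div_lt_one_div hq0 hq0_half]) ((div_lt_iff₀ hq0).1 hq0β).le ht01 hxq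
    hincr
  refine ⟨hfin, hle.trans ?_⟩
  have hcontrol : h t0 t1 ^ β ≤ h 0 T ^ β := Real.rpow_le_rpow
    (hctrl.apply_nonneg ht0 ht01 ht1) (hctrl.apply_le ht0 ht01 ht1) hβ0.le
  set M := max (max Lg (a * T ^ (1 - α)))
    (max (‖g 0 0‖ + h 0 T ^ β) ((∫ s in (0:ℝ)..T, |b s| ^ (1 / (1 - α))) ^ (1 - α)))
  have hM_control : h 0 T ^ β ≤ M :=
    (le_add_of_nonneg_left (norm_nonneg _)).trans ((le_max_left _ _).trans (le_max_right _ _))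
  have hM_lipschitz : Lg ≤ M := (le_max_left _ _).trans (le_max_left _ _)
  linarith [mul_le_mul_of_nonneg_right hM_lipschitz (pVar_nonneg q x t0 t1)]

/-- Lemma `lemma2`(i): under (H1)–(H3) and the choice of `q0, q`, if `x` is
continuous of finite `q`-variation on `[t0,t1] ⊆ [0,T]`, then `t ↦ g(t, x t)` has finite
`q0`-variation on `[t0,t1]` and `|||g(·,x_·)|||_{q0-var,[t0,t1]} ≤ M (1 + |||x|||_{q-var,[t0,t1]})`. -/
theorem stmt6
    {d m : ℕ} (p T : ℝ) (hp1 : 1 < p) (hp2 : p < 2) (hT : 0 < T)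
    (f : ℝ → Ed d → Ed d) (g : ℝ → Ed d → (Ed m →L[ℝ] Ed d))
    (hf : ContinuousOn (fun pr : ℝ × Ed d => f pr.1 pr.2) (Set.Icc 0 T ×ˢ Set.univ))
    (hg : ContinuousOn (fun pr : ℝ × Ed d => g pr.1 pr.2) (Set.Icc 0 T ×ˢ Set.univ))
    (Dg : ℝ → Ed d → (Ed d →L[ℝ] Ed m →L[ℝ] Ed d))
    (hDg : ∀ t ∈ Set.Icc (0:ℝ) T, ∀ x : Ed d, HasFDerivAt (g t) (Dg t x) x)
    (β δ Lg : ℝ) (hβ0 : 0 < β) (hβ1 : β ≤ 1) (hδ0 : 0 < δ) (hδ1 : δ ≤ 1) (hLg : 0 < Lg)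
    (h : ℝ → ℝ → ℝ) (hctrl : IsControlOn 0 T h)
    (MN : ℝ → ℝ) (hMN : ∀ N : ℝ, 0 ≤ N → 0 < MN N)
    (H1i : ∀ t ∈ Set.Icc (0:ℝ) T, ∀ x y : Ed d, ‖g t x - g t y‖ ≤ Lg * ‖x - y‖)
    (H1ii : ∀ N : ℝ, 0 ≤ N → ∀ t ∈ Set.Icc (0:ℝ) T, ∀ x y : Ed d, ‖x‖ ≤ N → ‖y‖ ≤ N →
      ‖Dg t x - Dg t y‖ ≤ MN N * ‖x - y‖ ^ δ)
    (H1iii : ∀ s t : ℝ, 0 ≤ s → s < t → t ≤ T → ∀ x : Ed d,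
      ‖g t x - g s x‖ + ‖Dg t x - Dg s x‖ ≤ h s t ^ β)
    (a α : ℝ) (b : ℝ → ℝ) (ha : 0 < a) (hα1 : 1 / 2 ≤ α) (hα2 : α < 1)
    (hbmem : IntervalIntegrable (fun s => |b s| ^ (1 / (1 - α))) MeasureTheory.volume 0 T)
    (LN : ℝ → ℝ) (hLN : ∀ N : ℝ, 0 ≤ N → 0 < LN N)
    (H2i : ∀ N : ℝ, 0 ≤ N → ∀ t ∈ Set.Icc (0:ℝ) T, ∀ x y : Ed d, ‖x‖ ≤ N → ‖y‖ ≤ N →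
      ‖f t x - f t y‖ ≤ LN N * ‖x - y‖)
    (H2ii : ∀ t ∈ Set.Icc (0:ℝ) T, ∀ x : Ed d, ‖f t x‖ ≤ a * ‖x‖ + b t)
    (H3a : p - 1 < δ) (H3b : 1 - 1 / p < β) (H3c : 1 - 1 / p < δ * α)
    (q0 q : ℝ)
    (hq0a : 1 - 1 / p < 1 / q0)
    (hq0b : 1 / q0 < min (min β (δ * α)) (min (δ / p) (1 / 2)))
    (hqa : 1 / (q0 * δ) ≤ 1 / q) (hqb : 1 / q < min α (1 / p))
    (t0 t1 : ℝ) (ht0 : 0 ≤ t0) (ht01 : t0 ≤ t1) (ht1 : t1 ≤ T)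
    (x : ℝ → Ed d) (hx : ContinuousOn x (Set.Icc t0 t1)) (hxq : FinitePVar q x t0 t1) :
    FinitePVar q0 (fun t => g t (x t)) t0 t1 ∧
    pVar q0 (fun t => g t (x t)) t0 t1 ≤
      (max (max Lg (a * T ^ (1 - α))) (max (‖g 0 0‖ + h 0 T ^ β) ((∫ s in (0:ℝ)..T, |b s| ^ (1 / (1 - α))) ^ (1 - α)))) * (1 + pVar q x t0 t1) :=
  stmt6_general p T hp1 g Dg β δ Lg hβ0 hδ0 hδ1 hLg h hctrl H1i H1iii a α b q0 q hq0a hq0b hqa t0 t1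
    ht0 ht01 ht1 x hxq
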